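/- For every finite graph G, the linear rank-width of G is at most the lettericity of G: lrwd(G) ≤ lett(G). -/

import Mathlib

open scoped Classical

/-- A letter realisation of a graph `G` over a decoder with alphabet `α` and arc
relation `D`: a letter assignment `ℓ` and an ordering `c` (a bijection onto
`Fin (Fintype.card V)`, i.e. onto `[n]`) such that distinct vertices `x, y` are
adjacent iff `(ℓ x, ℓ y) ∈ D` and `c x < c y`, or `(ℓ y, ℓ x) ∈ D` and `c y < c x`. -/
def IsLetterRealisation {V α : Type} [Fintype V] (G : SimpleGraph V)
    (D : α → α → Prop) (ℓ : V → α) (c : V ≃ Fin (Fintype.card V)) : Prop :=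
  ∀ x y : V, x ≠ y →
    (G.Adj x y ↔ (D (ℓ x) (ℓ y) ∧ c x < c y) ∨ (D (ℓ y) (ℓ x) ∧ c y < c x))

/-- The lettericity of `G`: the least `k` such that `G` has a letter realisation
over a decoder whose alphabet has (at most) `k` letters. -/
noncomputable def lettericity {V : Type} [Fintype V] (G : SimpleGraph V) : ℕ :=
  sInf {k | ∃ (D : Fin k → Fin k → Prop) (ℓ : V → Fin k) (c : V ≃ Fin (Fintype.card V)),
    IsLetterRealisation G D ℓ c}

/-- The cut-rank of a vertex subset `X`: the GF(2)-rank of the submatrix of the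
adjacency matrix with rows indexed by `X` and columns by its complement. -/
noncomputable def cutRank {V : Type} [Fintype V] (G : SimpleGraph V) (X : Set V) : ℕ :=
  Matrix.rank (Matrix.of fun (x : X) (y : ↥Xᶜ) => if G.Adj x.1 y.1 then (1 : ZMod 2) else 0)

/-- The linear rank-width of `G`: the minimum over all linear orders of the
vertices of the maximum cut-rank of an initial segment. -/
noncomputable def linRankWidth {V : Type} [Fintype V] (G : SimpleGraph V) : ℕ :=
  ⨅ σ : V ≃ Fin (Fintype.card V),
    (Finset.Ico 1 (Fintype.card V)).sup fun i => cutRank G {x : V | (σ x : ℕ) < i}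

/-! If `X` is an initial segment of the order of a letter realisation, then for `x ∈ X` and
`y ∉ X` adjacency is decided by `D (ℓ x) (ℓ y)` alone. So the cut matrix of `X` is the
submatrix at rows `ℓ x` of the `α × Xᶜ` matrix of the decoder, and its rank is at most `|α|`.
Taking the order of an optimal realisation gives `lrwd G ≤ lett G`. -/

namespace IsLetterRealisation

variable {V α : Type} [Fintype V] {G : SimpleGraph V} {D : α → α → Prop} {ℓ : V → α}
  {c : V ≃ Fin (Fintype.card V)}

theorem adj_iff_of_lt (h : IsLetterRealisation G D ℓ c) {x y : V} (hxy : c x < c y) :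
    G.Adj x y ↔ D (ℓ x) (ℓ y) := by
  have hne : x ≠ y := fun hxy' => hxy.ne (congrArg c hxy')
  rw [h x y hne]
  exact ⟨fun h' => h'.elim And.left fun h' => absurd h'.2 hxy.not_gt, fun hD => .inl ⟨hD, hxy⟩⟩

theorem cutRank_le_card [Fintype α] (h : IsLetterRealisation G D ℓ c) {X : Set V}
    (hX : ∀ x ∈ X, ∀ y ∉ X, c x < c y) : cutRank G X ≤ Fintype.card α := by
  let decoder : Matrix α ↥Xᶜ (ZMod 2) := Matrix.of fun a y => if D a (ℓ y.1) then 1 else 0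
  have hcut : (Matrix.of fun (x : X) (y : ↥Xᶜ) => if G.Adj x.1 y.1 then (1 : ZMod 2) else 0) =
      decoder.submatrix (ℓ ∘ Subtype.val) id := by
    ext x y
    simp [decoder, h.adj_iff_of_lt (hX x.1 x.2 y.1 y.2)]
  rw [cutRank, hcut]
  exact (decoder.rank_submatrix_le _ _).trans decoder.rank_le_card_height

theorem linRankWidth_le_card [Fintype α] (h : IsLetterRealisation G D ℓ c) :
    linRankWidth G ≤ Fintype.card α :=
  (ciInf_le (OrderBot.bddBelow _) c).trans (Finset.sup_le fun _ _ => h.cutRank_le_card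
    fun _ hx _ hy => Fin.lt_def.mpr (lt_of_lt_of_le hx (not_lt.mp hy)))

end IsLetterRealisation

theorem isLetterRealisation_self {V : Type} [Fintype V] (G : SimpleGraph V)
    (c : V ≃ Fin (Fintype.card V)) :
    IsLetterRealisation G (fun i j => G.Adj (c.symm i) (c.symm j)) c c := by
  intro x y hxy
  simp only [Equiv.symm_apply_apply, G.adj_comm y x, ← and_or_left]
  exact (and_iff_left (lt_or_gt_of_ne (c.injective.ne hxy))).symm

theorem exists_isLetterRealisation_lettericity {V : Type} [Fintype V] (G : SimpleGraph V) :
    ∃ (D : Fin (lettericity G) → Fin (lettericity G) → Prop) (ℓ : V → Fin (lettericity G))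
      (c : V ≃ Fin (Fintype.card V)), IsLetterRealisation G D ℓ c := by
  have hne : {k | ∃ (D : Fin k → Fin k → Prop) (ℓ : V → Fin k) (c : V ≃ Fin (Fintype.card V)),
      IsLetterRealisation G D ℓ c}.Nonempty :=
    ⟨_, _, _, _, isLetterRealisation_self G (Fintype.equivFin V)⟩
  exact Nat.sInf_mem hne

/-- the linear rank-width of `G` is at most its lettericity. -/
theorem stmt_6 {V : Type} [Fintype V] (G : SimpleGraph V) :
    linRankWidth G ≤ lettericity G := by
  obtain ⟨D, ℓ, c, h⟩ := exists_isLetterRealisation_lettericity G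
  simpa using h.linRankWidth_le_card
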